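/- arXiv:2203.01582 — 4 statements merged into one kernel-verified Lean document; each statement's English description precedes it below -/
import Mathlib

section
/- If sup_{n}(m_{n+1}−m_n)<∞, then there exist nonnegative numbers δ_k (k≥0) and constants c₁',c₂'>0 such that for every f(z)=Σ_{k≥0} α_k z^k ∈ A_μ^1 one has c₁'‖f‖₁ ≤ Σ_{k≥0} δ_k|α_k| ≤ c₂'‖f‖₁; that is, A_μ^1 is isomorphic to a weighted ℓ¹ space of Taylor coefficients. -/
open MeasureTheory Complex Real Set Filter
open scoped ENNReal NNReal Topology

noncomputable section

/-- The `k`-th Taylor coefficient of `f` at `0`. -/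
def tc (f : ℂ → ℂ) (k : ℕ) : ℂ := iteratedDeriv k f 0 / (Nat.factorial k : ℂ)

/-- The domain `R·𝔻`: the unit disc if `R = 1`, the whole plane if `R = ⊤`. -/
def dom (R : ℝ≥0∞) : Set ℂ := {z : ℂ | (‖z‖₊ : ℝ≥0∞) < R}

/-- The integral mean `M₁(g,r) = (1/2π) ∫₀^{2π} |g(r e^{iφ})| dφ`. -/
def M1 (g : ℂ → ℂ) (r : ℝ) : ℝ≥0∞ :=
  (∫⁻ φ in Set.Ioc (0 : ℝ) (2 * π),
      (‖g ((r : ℂ) * Complex.exp ((φ : ℂ) * Complex.I))‖₊ : ℝ≥0∞)) / ENNReal.ofReal (2 * π)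

/-- The `A¹_μ`-norm `‖g‖₁ = (1/2π) ∫₀^R ∫₀^{2π} |g(r e^{iφ})| dφ dμ(r)`. -/
def norm1 (μ : Measure ℝ) (g : ℂ → ℂ) : ℝ≥0∞ := ∫⁻ r, M1 g r ∂μ

/-- The weighted Bergman space `A¹_μ` on `R·𝔻`. -/
def Aone (R : ℝ≥0∞) (μ : Measure ℝ) : Set (ℂ → ℂ) :=
  {f | DifferentiableOn ℂ f (dom R) ∧ norm1 μ f < ⊤}

/-- Standing assumptions on `R` and the measure `μ`: `R = 1` or `R = ∞`; `μ` is a finite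
non-atomic positive Borel measure concentrated on `[0,R)` with `μ([r,R)) > 0` for all
`0 < r < R` and finite moments. -/
structure BergmanData (R : ℝ≥0∞) (μ : Measure ℝ) : Prop where
  hR : R = 1 ∨ R = ⊤
  finite : μ Set.univ < ⊤
  noAtoms : ∀ x : ℝ, μ {x} = 0
  support : μ {r : ℝ | r < 0 ∨ R ≤ ENNReal.ofReal r} = 0
  pos : ∀ r : ℝ, 0 < r → ENNReal.ofReal r < R →
    0 < μ {x : ℝ | r ≤ x ∧ ENNReal.ofReal x < R}
  moments : ∀ n : ℕ, 0 < n → (∫⁻ r, ENNReal.ofReal (r ^ n) ∂μ) < ⊤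

/-- Lower index `[m_{n-1}] + 1` of the `n`-th block (with the convention `m₋₁ = -1`). -/
def lowIdx (m : ℕ → ℝ) (n : ℕ) : ℕ := if n = 0 then 0 else ⌊m (n - 1)⌋.toNat + 1

/-- Upper index `[m_{n+1}]` of the `n`-th block. -/
def hiIdx (m : ℕ → ℝ) (n : ℕ) : ℕ := ⌊m (n + 1)⌋.toNat

/-- The block operator `T_n g = ∑_{k=[m_{n-1}]+1}^{[m_{n+1}]} t_{n,k} ĝ(k) z^k`. -/
def Tn (m : ℕ → ℝ) (t : ℕ → ℕ → ℝ) (g : ℂ → ℂ) (n : ℕ) : ℂ → ℂ :=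
  fun z => ∑ k ∈ Finset.Icc (lowIdx m n) (hiIdx m n), (t n k : ℂ) * tc g k * z ^ k

/-- The block data of Theorem 1.1: sequences `(sₙ)`, `(mₙ)`, `(dₙ)`, `(t_{n,k})` and
constants `c₁, c₂ > 0` realizing the equivalent expression of the `A¹_μ`-norm. -/
structure BlockData (R : ℝ≥0∞) (μ : Measure ℝ) where
  s : ℕ → ℝ
  m : ℕ → ℝ
  d : ℕ → ℝ
  t : ℕ → ℕ → ℝ
  c₁ : ℝ
  c₂ : ℝ
  s_pos : 0 < s 0
  s_mono : StrictMono s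
  s_lt : ∀ n, ENNReal.ofReal (s n) < R
  m_zero : m 0 = 0
  m_mono : StrictMono m
  d_nonneg : ∀ n, 0 ≤ d n
  t_nonneg : ∀ n k, 0 ≤ t n k
  c₁_pos : 0 < c₁
  c₂_pos : 0 < c₂
  lower : ∀ g : ℂ → ℂ, DifferentiableOn ℂ g (dom R) →
    ENNReal.ofReal c₁ * norm1 μ g ≤ ∑' n, ENNReal.ofReal (d n) * M1 (Tn m t g n) (s n)
  upper : ∀ g : ℂ → ℂ, DifferentiableOn ℂ g (dom R) →
    (∑' n, ENNReal.ofReal (d n) * M1 (Tn m t g n) (s n)) ≤ ENNReal.ofReal c₂ * norm1 μ g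

lemma orth (n : ℤ) :
    (∫ φ in (0:ℝ)..(2*π), Complex.exp ((n:ℂ) * Complex.I * φ)) =
      if n = 0 then (2*π : ℂ) else 0 := by
  split_ifs with h
  · subst h; simp
  · have hc : (n:ℂ) * Complex.I ≠ 0 := by
      simp [Complex.I_ne_zero, Complex.ext_iff]
      exact_mod_cast h
    rw [show (fun φ:ℝ => Complex.exp ((n:ℂ) * Complex.I * (φ:ℂ))) =
        (fun φ:ℝ => Complex.exp (((n:ℂ) * Complex.I) * (φ:ℝ))) from rfl]
    rw [integral_exp_mul_complex hc]
    have h1 : Complex.exp ((n:ℂ) * Complex.I * ((2*π:ℝ):ℂ)) = 1 := by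
      rw [← Complex.exp_int_mul_two_pi_mul_I n]
      push_cast; ring_nf
    push_cast at h1
    rw [show (n:ℂ) * Complex.I * ((2:ℝ)*π:ℝ) = (n:ℂ) * Complex.I * (2*(π:ℂ)) by push_cast; ring] at *
    simp [h1]

lemma integral_poly_mul (F : Finset ℕ) (a : ℕ → ℂ) (r : ℝ) (k : ℕ) (hk : k ∈ F) :
    (∫ φ in (0:ℝ)..(2*π),
        (∑ j ∈ F, a j * ((r:ℂ) * Complex.exp ((φ:ℂ) * Complex.I)) ^ j)
          * Complex.exp (-(k:ℂ) * Complex.I * φ))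
      = a k * (r:ℂ) ^ k * (2*π) := by
  have hfun : ∀ φ : ℝ,
      (∑ j ∈ F, a j * ((r:ℂ) * Complex.exp ((φ:ℂ) * Complex.I)) ^ j)
          * Complex.exp (-(k:ℂ) * Complex.I * φ)
        = ∑ j ∈ F, (a j * (r:ℂ) ^ j) *
            Complex.exp ((((j:ℤ) - (k:ℤ) : ℤ):ℂ) * Complex.I * φ) := by
    intro φ
    rw [Finset.sum_mul]
    refine Finset.sum_congr rfl fun j _hj => ?_
    rw [mul_pow, ← Complex.exp_nat_mul]
    rw [show a j * ((r:ℂ)^j * Complex.exp ((j:ℕ) * ((φ:ℂ) * Complex.I)))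
          * Complex.exp (-(k:ℂ) * Complex.I * φ)
        = (a j * (r:ℂ)^j) *
          (Complex.exp ((j:ℕ) * ((φ:ℂ) * Complex.I)) * Complex.exp (-(k:ℂ) * Complex.I * φ)) by ring]
    rw [← Complex.exp_add]
    congr 2
    push_cast
    ring
  simp_rw [hfun]
  rw [intervalIntegral.integral_finset_sum]
  · have : ∀ j ∈ F, (∫ φ in (0:ℝ)..(2*π),
        (a j * (r:ℂ) ^ j) * Complex.exp ((((j:ℤ) - (k:ℤ) : ℤ):ℂ) * Complex.I * φ))
        = (a j * (r:ℂ)^j) * (if ((j:ℤ) - (k:ℤ)) = 0 then (2*π:ℂ) else 0) := by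
      intro j _
      rw [intervalIntegral.integral_const_mul, orth]
    rw [Finset.sum_congr rfl this]
    rw [Finset.sum_eq_single k]
    · simp
    · intro j hj hjk
      have : ((j:ℤ) - (k:ℤ)) ≠ 0 := by
        intro h
        exact hjk (by omega)
      rw [if_neg this, mul_zero]
    · intro h; exact absurd hk h
  · intro j _
    apply Continuous.intervalIntegrable
    fun_prop

lemma M1_poly_le (F : Finset ℕ) (a : ℕ → ℂ) {r : ℝ} (hr : 0 ≤ r) :
    M1 (fun z => ∑ j ∈ F, a j * z ^ j) r
      ≤ ∑ j ∈ F, (‖a j‖₊ : ℝ≥0∞) * ENNReal.ofReal (r ^ j) := by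
  rw [M1]
  apply ENNReal.div_le_of_le_mul
  have hpt : ∀ φ : ℝ,
      (‖∑ j ∈ F, a j * ((r:ℂ) * Complex.exp ((φ:ℂ) * Complex.I)) ^ j‖₊ : ℝ≥0∞)
        ≤ ∑ j ∈ F, (‖a j‖₊ : ℝ≥0∞) * ENNReal.ofReal (r ^ j) := by
    intro φ
    calc (‖∑ j ∈ F, a j * ((r:ℂ) * Complex.exp ((φ:ℂ) * Complex.I)) ^ j‖₊ : ℝ≥0∞)
        ≤ ∑ j ∈ F, (‖a j * ((r:ℂ) * Complex.exp ((φ:ℂ) * Complex.I)) ^ j‖₊ : ℝ≥0∞) := by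
          exact_mod_cast nnnorm_sum_le F _
      _ ≤ ∑ j ∈ F, (‖a j‖₊ : ℝ≥0∞) * ENNReal.ofReal (r ^ j) := by
          refine Finset.sum_le_sum fun j _ => ?_
          have hw : ‖(r:ℂ) * Complex.exp ((φ:ℂ) * Complex.I)‖₊ = r.toNNReal := by
            ext
            simp [nnnorm_mul, Complex.norm_exp_ofReal_mul_I, _root_.abs_of_nonneg hr,
              Real.coe_toNNReal _ hr, Complex.norm_real, Real.norm_eq_abs]
          rw [nnnorm_mul, nnnorm_pow, hw, ENNReal.coe_mul, ENNReal.coe_pow,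
            ENNReal.ofReal_pow hr]
          rfl
  calc (∫⁻ φ in Set.Ioc (0:ℝ) (2*π),
          (‖∑ j ∈ F, a j * ((r:ℂ) * Complex.exp ((φ:ℂ) * Complex.I)) ^ j‖₊ : ℝ≥0∞))
      ≤ ∫⁻ _φ in Set.Ioc (0:ℝ) (2*π),
          (∑ j ∈ F, (‖a j‖₊ : ℝ≥0∞) * ENNReal.ofReal (r ^ j)) :=
        lintegral_mono fun φ => hpt φ
    _ = (∑ j ∈ F, (‖a j‖₊ : ℝ≥0∞) * ENNReal.ofReal (r ^ j)) * ENNReal.ofReal (2*π) := by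
        rw [setLIntegral_const, Real.volume_Ioc, sub_zero]

lemma le_M1_poly (F : Finset ℕ) (a : ℕ → ℂ) {r : ℝ} (hr : 0 ≤ r) {k : ℕ} (hk : k ∈ F) :
    (‖a k‖₊ : ℝ≥0∞) * ENNReal.ofReal (r ^ k)
      ≤ M1 (fun z => ∑ j ∈ F, a j * z ^ j) r := by
  have h2π : (0:ℝ) < 2*π := by positivity
  rw [M1, ENNReal.le_div_iff_mul_le
    (Or.inl (ENNReal.ofReal_pos.mpr h2π).ne') (Or.inl ENNReal.ofReal_ne_top)]
  set p : ℝ → ℂ := fun φ => ∑ j ∈ F, a j * ((r:ℂ) * Complex.exp ((φ:ℂ) * Complex.I)) ^ j with hp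
  have hcont : Continuous p := by fun_prop
  have hInt : IntegrableOn p (Set.Ioc (0:ℝ) (2*π)) := by
    exact (hcont.integrableOn_Icc (μ := volume)).mono_set Set.Ioc_subset_Icc_self
  have hkey := integral_poly_mul F a r k hk
  have hnorm : ‖a k * (r:ℂ)^k * (2*π:ℂ)‖ ≤ ∫ φ in Set.Ioc (0:ℝ) (2*π), ‖p φ‖ := by
    rw [← hkey]
    calc ‖∫ φ in (0:ℝ)..(2*π), p φ * Complex.exp (-(k:ℂ) * Complex.I * φ)‖
        ≤ ∫ φ in (0:ℝ)..(2*π), ‖p φ * Complex.exp (-(k:ℂ) * Complex.I * φ)‖ :=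
          intervalIntegral.norm_integral_le_integral_norm h2π.le
      _ = ∫ φ in (0:ℝ)..(2*π), ‖p φ‖ := by
          refine intervalIntegral.integral_congr fun φ _ => ?_
          rw [norm_mul]
          have : ‖Complex.exp (-(k:ℂ) * Complex.I * φ)‖ = 1 := by
            rw [Complex.norm_exp]
            simp [Complex.exp_re]
          rw [this, mul_one]
      _ = ∫ φ in Set.Ioc (0:ℝ) (2*π), ‖p φ‖ := by
          rw [intervalIntegral.integral_of_le h2π.le]
  have hL : ENNReal.ofReal (∫ φ in Set.Ioc (0:ℝ) (2*π), ‖p φ‖)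
      = ∫⁻ φ in Set.Ioc (0:ℝ) (2*π), (‖p φ‖₊ : ℝ≥0∞) :=
    ofReal_integral_norm_eq_lintegral_enorm hInt
  have hval : ‖a k * (r:ℂ)^k * (2*π:ℂ)‖ = ‖a k‖ * r^k * (2*π) := by
    rw [norm_mul, norm_mul, norm_pow]
    congr 2
    · simp [Complex.norm_real, Real.norm_eq_abs, _root_.abs_of_nonneg hr]
    · simp [norm_mul, Complex.norm_real, Real.norm_eq_abs,
        _root_.abs_of_nonneg Real.pi_nonneg]
  calc (‖a k‖₊ : ℝ≥0∞) * ENNReal.ofReal (r ^ k) * ENNReal.ofReal (2*π)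
      = ENNReal.ofReal (‖a k‖ * r^k * (2*π)) := by
        rw [← enorm_eq_nnnorm, ← ofReal_norm, ← ENNReal.ofReal_mul (norm_nonneg _),
          ← ENNReal.ofReal_mul (by positivity)]
    _ ≤ ENNReal.ofReal (∫ φ in Set.Ioc (0:ℝ) (2*π), ‖p φ‖) := by
        rw [← hval]; exact ENNReal.ofReal_le_ofReal hnorm
    _ = ∫⁻ φ in Set.Ioc (0:ℝ) (2*π), (‖p φ‖₊ : ℝ≥0∞) := hL


set_option maxHeartbeats 1000000 in
/-- If `sup_n (m_{n+1} - m_n) < ∞`, then there are nonnegative weights `δ_k` and constants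
`c₁', c₂' > 0` with `c₁' ‖f‖₁ ≤ ∑_k δ_k |f̂(k)| ≤ c₂' ‖f‖₁` for every `f ∈ A¹_μ`:
`A¹_μ` is isomorphic to a weighted `ℓ¹`-space of Taylor coefficients. -/
theorem stmt4 (R : ℝ≥0∞) (μ : Measure ℝ) (hμ : BergmanData R μ) (bd : BlockData R μ)
    (hm : ∃ B : ℝ, ∀ n, bd.m (n + 1) - bd.m n ≤ B) :
    ∃ δ : ℕ → ℝ, (∀ k, 0 ≤ δ k) ∧ ∃ c₁' c₂' : ℝ, 0 < c₁' ∧ 0 < c₂' ∧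
      ∀ f ∈ Aone R μ,
        ENNReal.ofReal c₁' * norm1 μ f ≤
            (∑' k, ENNReal.ofReal (δ k) * (‖tc f k‖₊ : ℝ≥0∞)) ∧
        (∑' k, ENNReal.ofReal (δ k) * (‖tc f k‖₊ : ℝ≥0∞)) ≤ ENNReal.ofReal c₂' * norm1 μ f := by
  classical
  obtain ⟨B, hB⟩ := hm
  set N : ℕ := (⌊2*B⌋).toNat + 2 with hN
  have hm0 : ∀ j, 0 ≤ bd.m j := fun j => by
    have := bd.m_mono.monotone (Nat.zero_le j); rw [bd.m_zero] at this; exact this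
  have hcard : ∀ n, (Finset.Icc (lowIdx bd.m n) (hiIdx bd.m n)).card ≤ N := by
    intro n
    match n with
    | 0 =>
      rw [lowIdx, if_pos rfl, hiIdx, Nat.card_Icc]
      have hm1 : 0 < bd.m (0+1) := by
        have := bd.m_mono (Nat.zero_lt_one); rw [bd.m_zero] at this; simpa using this
      have h1 : bd.m (0+1) ≤ 2*B := by
        have h2 := hB 0; rw [bd.m_zero] at h2; simp at h2 ⊢; linarith
      have h3 : ⌊bd.m (0+1)⌋ ≤ ⌊2*B⌋ := Int.floor_le_floor h1
      omega
    | (n+1) =>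
      rw [lowIdx, if_neg (Nat.succ_ne_zero n), hiIdx, Nat.card_Icc]
      simp only [Nat.add_sub_cancel]
      have key : ⌊bd.m (n+1+1)⌋ ≤ ⌊bd.m n⌋ + ⌊2*B⌋ + 1 := by
        have h1 : bd.m (n+1+1) ≤ bd.m n + 2*B := by
          have h2 := hB (n+1); have h3 := hB n; linarith
        have h2 : bd.m n < (⌊bd.m n⌋:ℝ) + 1 := Int.lt_floor_add_one _
        have h3 : 2*B < (⌊2*B⌋:ℝ) + 1 := Int.lt_floor_add_one _
        have h4 : ⌊bd.m (n+1+1)⌋ < ⌊bd.m n⌋ + ⌊2*B⌋ + 2 := by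
          rw [Int.floor_lt]; push_cast; linarith
        omega
      have h0 : 0 ≤ ⌊bd.m n⌋ := Int.floor_nonneg.mpr (hm0 n)
      omega
  set F : ℕ → Finset ℕ := fun n => Finset.Icc (lowIdx bd.m n) (hiIdx bd.m n) with hF
  have hs : ∀ n, 0 ≤ bd.s n := fun n =>
    le_of_lt (lt_of_lt_of_le bd.s_pos (bd.s_mono.monotone (Nat.zero_le n)))
  set W : ℕ → ℕ → ℝ≥0∞ := fun n k =>
    if k ∈ F n then ENNReal.ofReal (bd.d n) * ENNReal.ofReal (bd.t n k * bd.s n ^ k) else 0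
    with hWdef
  have hNpos : (0:ℝ) < (N:ℝ) := by exact_mod_cast Nat.succ_le_of_lt (Nat.pos_of_ne_zero (by omega))
  refine ⟨fun k => (∑' n, W n k).toReal, fun k => ENNReal.toReal_nonneg,
    bd.c₁, (N:ℝ) * bd.c₂, bd.c₁_pos, mul_pos hNpos bd.c₂_pos, ?_⟩
  rintro f ⟨hdiff, hfin⟩
  have hTn : ∀ n, Tn bd.m bd.t f n
      = fun z => ∑ k ∈ F n, ((bd.t n k : ℂ) * tc f k) * z ^ k := fun n => rfl
  have hsum : ∀ n, (∑' k, W n k * (‖tc f k‖₊ : ℝ≥0∞))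
      = ENNReal.ofReal (bd.d n)
        * ∑ k ∈ F n, (‖(bd.t n k:ℂ) * tc f k‖₊ : ℝ≥0∞) * ENNReal.ofReal (bd.s n ^ k) := by
    intro n
    rw [tsum_eq_sum (s := F n) (f := fun k => W n k * (‖tc f k‖₊ : ℝ≥0∞))
      (fun k hk => by rw [hWdef]; simp only [if_neg hk, zero_mul])]
    rw [Finset.mul_sum]
    refine Finset.sum_congr rfl fun k hk => ?_
    have h1 : (‖(bd.t n k:ℂ) * tc f k‖₊ : ℝ≥0∞)
        = ENNReal.ofReal (bd.t n k) * (‖tc f k‖₊ : ℝ≥0∞) := by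
      rw [nnnorm_mul, ENNReal.coe_mul]
      congr 1
      rw [← enorm_eq_nnnorm, ← ofReal_norm]
      congr 1
      simp [Complex.norm_real, Real.norm_eq_abs, _root_.abs_of_nonneg (bd.t_nonneg n k)]
    rw [hWdef]
    simp only [if_pos hk]
    rw [h1, ENNReal.ofReal_mul (bd.t_nonneg n k)]
    ring
  have hM1lo : ∀ n, ENNReal.ofReal (bd.d n) * M1 (Tn bd.m bd.t f n) (bd.s n)
      ≤ ∑' k, W n k * (‖tc f k‖₊ : ℝ≥0∞) := by
    intro n
    rw [hsum n, hTn n]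
    exact mul_le_mul_right (M1_poly_le (F n) (fun j => (bd.t n j:ℂ) * tc f j) (hs n)) _
  have hM1hi : ∀ n, (∑' k, W n k * (‖tc f k‖₊ : ℝ≥0∞))
      ≤ (N:ℝ≥0∞) * (ENNReal.ofReal (bd.d n) * M1 (Tn bd.m bd.t f n) (bd.s n)) := by
    intro n
    rw [hsum n, hTn n]
    have h1 : (∑ k ∈ F n, (‖(bd.t n k:ℂ) * tc f k‖₊:ℝ≥0∞) * ENNReal.ofReal (bd.s n ^ k))
        ≤ (F n).card •
            M1 (fun z => ∑ j ∈ F n, ((bd.t n j:ℂ) * tc f j) * z ^ j) (bd.s n) :=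
      Finset.sum_le_card_nsmul (F n)
        (fun k => (‖(bd.t n k:ℂ) * tc f k‖₊:ℝ≥0∞) * ENNReal.ofReal (bd.s n ^ k))
        (M1 (fun z => ∑ j ∈ F n, ((bd.t n j:ℂ) * tc f j) * z ^ j) (bd.s n))
        (fun k hk => le_M1_poly (F n) (fun j => (bd.t n j:ℂ) * tc f j) (hs n) hk)
    calc ENNReal.ofReal (bd.d n)
          * ∑ k ∈ F n, (‖(bd.t n k:ℂ) * tc f k‖₊:ℝ≥0∞) * ENNReal.ofReal (bd.s n ^ k)
        ≤ ENNReal.ofReal (bd.d n) * ((F n).card •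
            M1 (fun z => ∑ j ∈ F n, ((bd.t n j:ℂ) * tc f j) * z ^ j) (bd.s n)) :=
          mul_le_mul_right h1 _
      _ ≤ (N:ℝ≥0∞) * (ENNReal.ofReal (bd.d n)
            * M1 (fun z => ∑ j ∈ F n, ((bd.t n j:ℂ) * tc f j) * z ^ j) (bd.s n)) := by
          rw [nsmul_eq_mul]
          rw [← mul_assoc, mul_comm (ENNReal.ofReal (bd.d n)) (((F n).card : ℝ≥0∞)),
            mul_assoc]
          exact mul_le_mul_left (by exact_mod_cast hcard n) _
  have hFub : (∑' k, (∑' n, W n k) * (‖tc f k‖₊ : ℝ≥0∞))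
      = ∑' n, ∑' k, W n k * (‖tc f k‖₊ : ℝ≥0∞) := by
    have h1 : (∑' k, (∑' n, W n k) * (‖tc f k‖₊ : ℝ≥0∞))
        = ∑' k, ∑' n, W n k * (‖tc f k‖₊ : ℝ≥0∞) :=
      tsum_congr fun k => (ENNReal.tsum_mul_right).symm
    rw [h1, ENNReal.tsum_comm]
  have hup2 : (∑' k, (∑' n, W n k) * (‖tc f k‖₊ : ℝ≥0∞))
      ≤ ENNReal.ofReal ((N:ℝ) * bd.c₂) * norm1 μ f := by
    rw [hFub]
    calc (∑' n, ∑' k, W n k * (‖tc f k‖₊ : ℝ≥0∞))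
        ≤ ∑' n, (N:ℝ≥0∞) * (ENNReal.ofReal (bd.d n) * M1 (Tn bd.m bd.t f n) (bd.s n)) :=
          ENNReal.tsum_le_tsum hM1hi
      _ = (N:ℝ≥0∞) * ∑' n, ENNReal.ofReal (bd.d n) * M1 (Tn bd.m bd.t f n) (bd.s n) :=
          ENNReal.tsum_mul_left
      _ ≤ (N:ℝ≥0∞) * (ENNReal.ofReal bd.c₂ * norm1 μ f) :=
          mul_le_mul_right (bd.upper f hdiff) _
      _ = ENNReal.ofReal ((N:ℝ) * bd.c₂) * norm1 μ f := by
          rw [ENNReal.ofReal_mul (Nat.cast_nonneg N), ENNReal.ofReal_natCast, mul_assoc]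
  have hlo2 : ENNReal.ofReal bd.c₁ * norm1 μ f
      ≤ ∑' k, (∑' n, W n k) * (‖tc f k‖₊ : ℝ≥0∞) := by
    rw [hFub]
    exact (bd.lower f hdiff).trans (ENNReal.tsum_le_tsum hM1lo)
  have htop : (∑' k, (∑' n, W n k) * (‖tc f k‖₊ : ℝ≥0∞)) < ⊤ :=
    lt_of_le_of_lt hup2 (ENNReal.mul_lt_top ENNReal.ofReal_lt_top hfin)
  have heq : (∑' k, ENNReal.ofReal ((∑' n, W n k).toReal) * (‖tc f k‖₊ : ℝ≥0∞))
      = ∑' k, (∑' n, W n k) * (‖tc f k‖₊ : ℝ≥0∞) := by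
    refine tsum_congr fun k => ?_
    by_cases hΔ : (∑' n, W n k) = ⊤
    · have hle : (∑' n, W n k) * (‖tc f k‖₊ : ℝ≥0∞)
          ≤ ∑' k, (∑' n, W n k) * (‖tc f k‖₊ : ℝ≥0∞) := ENNReal.le_tsum k
      have hz : (‖tc f k‖₊ : ℝ≥0∞) = 0 := by
        by_contra hne
        have h5 := lt_of_le_of_lt hle htop
        rw [hΔ, ENNReal.top_mul hne] at h5
        exact lt_irrefl _ h5
      rw [hz, mul_zero, mul_zero]
    · rw [ENNReal.ofReal_toReal hΔ]
  exact ⟨hlo2.trans_eq heq.symm, heq.trans_le hup2⟩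


end
end

section
/- Let R=∞ and dμ(r)=exp(−(log r)²)dr on [0,∞). Then the Bergman space A_μ^1 of entire functions is solid: whenever f∈A_μ^1 and g is entire with |ĝ(k)|≤|f̂(k)| for all k, then g∈A_μ^1. -/
open MeasureTheory Complex Real Set Filter
open scoped ENNReal NNReal Topology

noncomputable section

/-- The solid hull `S(A¹_μ)`. -/
def SolidHull (R : ℝ≥0∞) (μ : Measure ℝ) : Set (ℂ → ℂ) :=
  {g | DifferentiableOn ℂ g (dom R) ∧ ∃ f ∈ Aone R μ, ∀ k, ‖tc g k‖ ≤ ‖tc f k‖}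

/-- The measure `dμ(r) = exp(-(log r)²) dr` on `[0,∞)`. -/
def muLog : Measure ℝ :=
  ((volume : Measure ℝ).restrict (Set.Ioi (0 : ℝ))).withDensity
    fun r => ENNReal.ofReal (Real.exp (-(Real.log r) ^ 2))

/- ### helpers -/

lemma dom_top : dom ⊤ = Set.univ := by
  ext z; simp [dom]

lemma hasSum_tc {g : ℂ → ℂ} (hg : Differentiable ℂ g) (z : ℂ) :
    HasSum (fun k => tc g k * z ^ k) (g z) := by
  have h := Complex.hasSum_taylorSeries_of_entire hg 0 z
  simp only [sub_zero, smul_eq_mul] at h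
  convert h using 2 with k
  case e'_3 => rfl
  simp [tc, div_eq_inv_mul]
  ring

lemma norm_circle (r : ℝ) (hr : 0 ≤ r) (φ : ℝ) :
    ‖(r : ℂ) * Complex.exp ((φ : ℂ) * Complex.I)‖ = r := by
  rw [norm_mul, Complex.norm_exp]
  simp [hr, _root_.abs_of_nonneg hr]

/-- pointwise series bound -/
lemma pointwise_bound {g : ℂ → ℂ} (hg : Differentiable ℂ g) {r : ℝ} (hr : 0 ≤ r) (φ : ℝ) :
    (‖g ((r : ℂ) * Complex.exp ((φ : ℂ) * Complex.I))‖₊ : ℝ≥0∞) ≤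
      ∑' k, (‖tc g k‖₊ : ℝ≥0∞) * (ENNReal.ofReal r) ^ k := by
  set z := (r : ℂ) * Complex.exp ((φ : ℂ) * Complex.I) with hz
  have h := hasSum_tc hg z
  have hnz : ‖z‖ = r := norm_circle r hr φ
  have key : (‖g z‖₊ : ℝ≥0∞) ≤ ∑' k, (‖tc g k * z ^ k‖₊ : ℝ≥0∞) := by
    by_cases hs : Summable fun k => ‖tc g k * z ^ k‖₊
    · rw [← ENNReal.coe_tsum hs]
      exact_mod_cast h.tsum_eq ▸ nnnorm_tsum_le hs
    · rw [show (∑' k, (‖tc g k * z ^ k‖₊ : ℝ≥0∞)) = ⊤ by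
        by_contra hne
        exact hs (ENNReal.tsum_coe_ne_top_iff_summable.mp hne)]
      exact le_top
  refine key.trans (le_of_eq (tsum_congr fun k => ?_))
  rw [nnnorm_mul, nnnorm_pow, ENNReal.coe_mul, ENNReal.coe_pow]
  congr 2
  rw [← enorm_eq_nnnorm, ← ofReal_norm, hnz]

/-- Lemma B : upper bound for M1 -/
lemma M1_le {g : ℂ → ℂ} (hg : Differentiable ℂ g) {r : ℝ} (hr : 0 ≤ r) :
    M1 g r ≤ ∑' k, (‖tc g k‖₊ : ℝ≥0∞) * (ENNReal.ofReal r) ^ k := by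
  set S := ∑' k, (‖tc g k‖₊ : ℝ≥0∞) * (ENNReal.ofReal r) ^ k with hS
  have h1 : (∫⁻ φ in Set.Ioc (0 : ℝ) (2 * π),
      (‖g ((r : ℂ) * Complex.exp ((φ : ℂ) * Complex.I))‖₊ : ℝ≥0∞)) ≤ S * ENNReal.ofReal (2 * π) := by
    calc _ ≤ ∫⁻ _ in Set.Ioc (0 : ℝ) (2 * π), S :=
          lintegral_mono fun φ => pointwise_bound hg hr φ
      _ = S * ENNReal.ofReal (2 * π) := by
          rw [MeasureTheory.setLIntegral_const, Real.volume_Ioc, sub_zero]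
  rw [M1]
  exact (ENNReal.div_le_iff (by positivity) ENNReal.ofReal_ne_top).mpr h1

/-- Lemma A : Cauchy coefficient bound -/
lemma coeff_le_M1 {f : ℂ → ℂ} (hf : Differentiable ℂ f) {r : ℝ} (hr : 0 < r) (k : ℕ) :
    (‖tc f k‖₊ : ℝ≥0∞) * (ENNReal.ofReal r) ^ k ≤ M1 f r := by
  set R : ℝ≥0 := ⟨r, hr.le⟩ with hR
  have hball : DifferentiableOn ℂ f (Metric.closedBall 0 (R : ℝ)) := hf.differentiableOn
  have hps : HasFPowerSeriesOnBall f (cauchyPowerSeries f 0 R) 0 R :=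
    hball.hasFPowerSeriesOnBall (by exact_mod_cast hr)
  set p := cauchyPowerSeries f 0 (R : ℝ) with hp
  -- tc f k = p k (1,…,1)
  have htc : tc f k = p k (fun _ => (1 : ℂ)) := by
    have h1 := hps.factorial_smul (1 : ℂ) k
    rw [tc, iteratedDeriv_eq_iteratedFDeriv, ← h1, nsmul_eq_mul,
      mul_div_cancel_left₀ _ (by exact_mod_cast Nat.factorial_ne_zero k)]
  -- real inequality
  have hnorm : ‖tc f k‖ * r ^ k ≤
      (2 * π)⁻¹ * ∫ θ in (0:ℝ)..2 * π, ‖f (circleMap 0 r θ)‖ := by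
    have h2 : ‖tc f k‖ ≤ ‖p k‖ := by
      rw [htc]
      calc ‖p k (fun _ => (1:ℂ))‖ ≤ ‖p k‖ * ∏ _i : Fin k, ‖(1:ℂ)‖ :=
            (p k).le_opNorm _
        _ = ‖p k‖ := by simp
    have h3 := norm_cauchyPowerSeries_le f 0 (R : ℝ) k
    have h4 : ‖tc f k‖ ≤
        ((2 * π)⁻¹ * ∫ θ in (0:ℝ)..2 * π, ‖f (circleMap 0 r θ)‖) * (|r|⁻¹) ^ k :=
      h2.trans h3
    have habs : |r| = r := abs_of_pos hr
    rw [habs] at h4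
    have hrk : (0:ℝ) < r ^ k := pow_pos hr k
    calc ‖tc f k‖ * r ^ k
        ≤ (((2 * π)⁻¹ * ∫ θ in (0:ℝ)..2 * π, ‖f (circleMap 0 r θ)‖) * (r⁻¹) ^ k) * r ^ k :=
          mul_le_mul_of_nonneg_right h4 hrk.le
      _ = (2 * π)⁻¹ * ∫ θ in (0:ℝ)..2 * π, ‖f (circleMap 0 r θ)‖ := by
          rw [mul_assoc _ (r⁻¹ ^ k) (r ^ k), ← mul_pow, inv_mul_cancel₀ hr.ne', one_pow, mul_one]
  -- identify the interval integral with the lintegral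
  have hcont : Continuous fun φ : ℝ => ‖f ((r : ℂ) * Complex.exp ((φ : ℂ) * Complex.I))‖ := by
    exact (hf.continuous.comp (by fun_prop : Continuous fun φ : ℝ => (r : ℂ) * Complex.exp ((φ : ℂ) * Complex.I))).norm
  have hint : IntegrableOn (fun φ : ℝ => ‖f ((r : ℂ) * Complex.exp ((φ : ℂ) * Complex.I))‖)
      (Set.Ioc (0:ℝ) (2 * π)) := hcont.integrableOn_Ioc
  have heq : (∫⁻ φ in Set.Ioc (0 : ℝ) (2 * π),
        (‖f ((r : ℂ) * Complex.exp ((φ : ℂ) * Complex.I))‖₊ : ℝ≥0∞)) =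
      ENNReal.ofReal (∫ θ in (0:ℝ)..2 * π, ‖f (circleMap 0 r θ)‖) := by
    simp only [circleMap, zero_add]
    rw [intervalIntegral.integral_of_le Real.two_pi_pos.le,
      ofReal_integral_eq_lintegral_ofReal hint (Filter.Eventually.of_forall fun φ => norm_nonneg _)]
    simp_rw [ofReal_norm, enorm_eq_nnnorm]
  rw [M1, heq]
  rw [ENNReal.le_div_iff_mul_le (Or.inl (ne_of_gt (ENNReal.ofReal_pos.2 Real.two_pi_pos)))
    (Or.inl ENNReal.ofReal_ne_top)]
  calc (‖tc f k‖₊ : ℝ≥0∞) * ENNReal.ofReal r ^ k * ENNReal.ofReal (2 * π)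
      = ENNReal.ofReal ((‖tc f k‖ * r ^ k) * (2 * π)) := by
        rw [← enorm_eq_nnnorm, ← ofReal_norm, ← ENNReal.ofReal_pow hr.le,
          ← ENNReal.ofReal_mul (norm_nonneg _),
          ← ENNReal.ofReal_mul (by positivity : (0:ℝ) ≤ ‖tc f k‖ * r ^ k)]
    _ ≤ ENNReal.ofReal (∫ θ in (0:ℝ)..2 * π, ‖f (circleMap 0 r θ)‖) := by
        apply ENNReal.ofReal_le_ofReal
        have := mul_le_mul_of_nonneg_right hnorm Real.two_pi_pos.le
        calc ‖tc f k‖ * r ^ k * (2 * π) ≤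
            ((2 * π)⁻¹ * ∫ θ in (0:ℝ)..2 * π, ‖f (circleMap 0 r θ)‖) * (2 * π) := this
          _ = ∫ θ in (0:ℝ)..2 * π, ‖f (circleMap 0 r θ)‖ := by field_simp

/- ### measure estimates -/

lemma lintegral_image_eq_lintegral_abs_deriv_mul' {s : Set ℝ} {f f' : ℝ → ℝ}
    (hs : MeasurableSet s) (hf' : ∀ x ∈ s, HasDerivWithinAt f (f' x) s x)
    (hf : Set.InjOn f s) (g : ℝ → ℝ≥0∞) :
    ∫⁻ x in f '' s, g x = ∫⁻ x in s, ENNReal.ofReal |f' x| * g (f x) := by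
  simpa only [ContinuousLinearMap.det_toSpanSingleton] using
    lintegral_image_eq_lintegral_abs_det_fderiv_mul volume hs
      (fun x hx => (hf' x hx).hasFDerivWithinAt) hf g

/-- substitution r = exp t on the half line -/
lemma lintegral_Ioi_comp_exp (g : ℝ → ℝ≥0∞) :
    ∫⁻ r in Set.Ioi (0:ℝ), g r = ∫⁻ x, ENNReal.ofReal (Real.exp x) * g (Real.exp x) := by
  have h := lintegral_image_eq_lintegral_abs_deriv_mul' (s := Set.univ)
    (f := Real.exp) (f' := Real.exp) MeasurableSet.univ
    (fun x _ => (Real.hasDerivAt_exp x).hasDerivWithinAt)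
    (Real.exp_injective.injOn) g
  rw [Set.image_univ, Real.range_exp] at h
  simpa [abs_of_pos (Real.exp_pos _)] using h

/-- the weight moments -/
lemma muLog_lintegral (h : ℝ → ℝ≥0∞) :
    ∫⁻ r, h r ∂muLog
      = ∫⁻ r in Set.Ioi (0:ℝ), ENNReal.ofReal (Real.exp (-(Real.log r) ^ 2)) * h r := by
  rw [muLog, lintegral_withDensity_eq_lintegral_mul_non_measurable _
    (f := fun r : ℝ => ENNReal.ofReal (Real.exp (-(Real.log r) ^ 2)))
    (((Real.measurable_log.pow_const 2).neg.exp).ennreal_ofReal)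
    (Filter.Eventually.of_forall fun r => ENNReal.ofReal_lt_top)]
  rfl

lemma gauss_lintegral (a : ℝ) :
    ∫⁻ x, ENNReal.ofReal (Real.exp (-(x - a) ^ 2)) = ENNReal.ofReal (Real.sqrt π) := by
  have hi : Integrable (fun x : ℝ => Real.exp (-(x - a) ^ 2)) := by
    have h0 : Integrable (fun x : ℝ => Real.exp (-1 * x ^ 2)) := integrable_exp_neg_mul_sq one_pos
    simpa [neg_mul, one_mul] using h0.comp_sub_right a
  rw [← ofReal_integral_eq_lintegral_ofReal hi
    (Filter.Eventually.of_forall fun x => (Real.exp_pos _).le)]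
  congr 1
  have h1 : ∫ x : ℝ, Real.exp (-(x - a) ^ 2) = ∫ x : ℝ, Real.exp (-x ^ 2) :=
    integral_sub_right_eq_self (fun x : ℝ => Real.exp (-x ^ 2)) a
  rw [h1]
  simpa [neg_mul, one_mul] using integral_gaussian 1

/-- the k-th moment of muLog -/
lemma mom_eq (k : ℕ) :
    ∫⁻ r, (ENNReal.ofReal r) ^ k ∂muLog
      = ENNReal.ofReal (Real.exp (((k : ℝ) + 1) ^ 2 / 4)) * ENNReal.ofReal (Real.sqrt π) := by
  rw [muLog_lintegral, lintegral_Ioi_comp_exp]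
  have key : ∀ x : ℝ,
      ENNReal.ofReal (Real.exp x) * (ENNReal.ofReal (Real.exp (-(Real.log (Real.exp x)) ^ 2)) *
        (ENNReal.ofReal (Real.exp x)) ^ k)
      = ENNReal.ofReal (Real.exp (((k : ℝ) + 1) ^ 2 / 4)) *
          ENNReal.ofReal (Real.exp (-(x - ((k : ℝ) + 1) / 2) ^ 2)) := by
    intro x
    rw [Real.log_exp, ← ENNReal.ofReal_pow (Real.exp_pos _).le, ← Real.exp_nat_mul,
      ← ENNReal.ofReal_mul (Real.exp_pos _).le, ← ENNReal.ofReal_mul (Real.exp_pos _).le,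
      ← Real.exp_add, ← Real.exp_add, ← ENNReal.ofReal_mul (Real.exp_pos _).le, ← Real.exp_add]
    congr 2
    ring
  simp_rw [key]
  rw [lintegral_const_mul _ (by fun_prop), gauss_lintegral]

def Ik (k : ℕ) : Set ℝ := Set.Ioc (Real.exp ((k : ℝ) / 2)) (Real.exp (((k : ℝ) + 1) / 2))

lemma Ik_subset (k : ℕ) : Ik k ⊆ Set.Ioi (0 : ℝ) :=
  fun r hr => lt_trans (Real.exp_pos _) hr.1

lemma Ik_meas (k : ℕ) : MeasurableSet (Ik k) := measurableSet_Ioc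

lemma Ik_disjoint : Pairwise (Function.onFun Disjoint Ik) := by
  intro i j hij
  have key : ∀ i j : ℕ, i < j → Disjoint (Ik i) (Ik j) := by
    intro i j h
    apply Set.Ioc_disjoint_Ioc.mpr
    have h1 : ((i : ℝ) + 1) / 2 ≤ (j : ℝ) / 2 := by
      have : (i : ℝ) + 1 ≤ j := by exact_mod_cast h
      linarith
    calc min (Real.exp (((i:ℝ) + 1) / 2)) (Real.exp (((j:ℝ) + 1) / 2))
        ≤ Real.exp (((i:ℝ) + 1) / 2) := min_le_left _ _
      _ ≤ Real.exp ((j:ℝ) / 2) := Real.exp_le_exp.mpr h1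
      _ ≤ max (Real.exp ((i:ℝ) / 2)) (Real.exp ((j:ℝ) / 2)) := le_max_right _ _
  rcases lt_or_gt_of_ne hij with h | h
  · exact key _ _ h
  · exact (key _ _ h).symm

lemma muLog_restrict_lintegral {s : Set ℝ} (hs : MeasurableSet s) (hsub : s ⊆ Set.Ioi (0:ℝ))
    (h : ℝ → ℝ≥0∞) :
    ∫⁻ r in s, h r ∂muLog
      = ∫⁻ r in s, ENNReal.ofReal (Real.exp (-(Real.log r) ^ 2)) * h r := by
  rw [muLog, restrict_withDensity hs, Measure.restrict_restrict hs,
    Set.inter_eq_self_of_subset_left hsub,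
    lintegral_withDensity_eq_lintegral_mul_non_measurable _
    (f := fun r : ℝ => ENNReal.ofReal (Real.exp (-(Real.log r) ^ 2)))
    (((Real.measurable_log.pow_const 2).neg.exp).ennreal_ofReal)
    (Filter.Eventually.of_forall fun r => ENNReal.ofReal_lt_top)]
  rfl

lemma nu_ge (k : ℕ) :
    ENNReal.ofReal (Real.exp (((k:ℝ)^2 - 1)/4) *
        (Real.exp (((k:ℝ)+1)/2) - Real.exp ((k:ℝ)/2)))
      ≤ ∫⁻ r in Ik k, (ENNReal.ofReal r) ^ k ∂muLog := by
  rw [muLog_restrict_lintegral (Ik_meas k) (Ik_subset k)]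
  have hpt : ∀ r ∈ Ik k,
      ENNReal.ofReal (Real.exp (((k:ℝ)^2 - 1)/4))
        ≤ ENNReal.ofReal (Real.exp (-(Real.log r) ^ 2)) * (ENNReal.ofReal r) ^ k := by
    intro r hr
    have hr0 : 0 < r := Ik_subset k hr
    set t := Real.log r with htdef
    have ht1 : (k:ℝ)/2 ≤ t := by
      rw [htdef, Real.le_log_iff_exp_le hr0]
      exact hr.1.le
    have ht2 : t ≤ ((k:ℝ)+1)/2 := by
      rw [htdef, Real.log_le_iff_le_exp hr0]
      exact hr.2
    have hrk : (ENNReal.ofReal r) ^ k = ENNReal.ofReal (Real.exp ((k:ℝ) * t)) := by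
      rw [← ENNReal.ofReal_pow hr0.le]
      congr 1
      conv_lhs => rw [← Real.exp_log hr0]
      rw [← Real.exp_nat_mul]
    rw [hrk, ← ENNReal.ofReal_mul (Real.exp_pos _).le, ← Real.exp_add]
    apply ENNReal.ofReal_le_ofReal
    apply Real.exp_le_exp.mpr
    nlinarith [mul_nonneg (by linarith : (0:ℝ) ≤ t - ((k:ℝ)-1)/2)
      (by linarith : (0:ℝ) ≤ ((k:ℝ)+1)/2 - t)]
  calc ENNReal.ofReal (Real.exp (((k:ℝ)^2 - 1)/4) *
        (Real.exp (((k:ℝ)+1)/2) - Real.exp ((k:ℝ)/2)))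
      = ENNReal.ofReal (Real.exp (((k:ℝ)^2 - 1)/4)) * volume (Ik k) := by
        rw [Ik, Real.volume_Ioc, ← ENNReal.ofReal_mul (Real.exp_pos _).le]
    _ = ∫⁻ _ in Ik k, ENNReal.ofReal (Real.exp (((k:ℝ)^2 - 1)/4)) := by
        rw [MeasureTheory.setLIntegral_const]
    _ ≤ _ := by
        apply lintegral_mono_ae
        filter_upwards [ae_restrict_mem (Ik_meas k)] with r hr
        exact hpt r hr

def Ccst : ℝ≥0∞ := ENNReal.ofReal (Real.sqrt π * Real.exp 2⁻¹ / (Real.exp 2⁻¹ - 1))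

lemma Ccst_ne_top : Ccst ≠ ⊤ := ENNReal.ofReal_ne_top

lemma mom_le_nu (k : ℕ) :
    ∫⁻ r, (ENNReal.ofReal r) ^ k ∂muLog
      ≤ Ccst * ∫⁻ r in Ik k, (ENNReal.ofReal r) ^ k ∂muLog := by
  rw [mom_eq]
  refine le_trans (le_of_eq ?_) (mul_le_mul_right (nu_ge k) Ccst)
  have hu : (1:ℝ) < Real.exp 2⁻¹ := by
    rw [show (1:ℝ) = Real.exp 0 by simp]
    exact Real.exp_lt_exp.mpr (by norm_num)
  have hupos : (0:ℝ) < Real.exp 2⁻¹ := Real.exp_pos _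
  have hne : Real.exp 2⁻¹ - 1 ≠ 0 := sub_ne_zero.2 hu.ne'
  have hC0 : (0:ℝ) ≤ Real.sqrt π * Real.exp 2⁻¹ / (Real.exp 2⁻¹ - 1) :=
    div_nonneg (by positivity) (by linarith)
  rw [Ccst, ← ENNReal.ofReal_mul (by positivity), ← ENNReal.ofReal_mul hC0]
  congr 1
  have h1 : Real.exp (((k:ℝ)^2-1)/4) * Real.exp (((k:ℝ)+1)/2)
      = Real.exp (((k:ℝ)+1)^2/4) := by
    rw [← Real.exp_add]; congr 1; ring
  have h2 : Real.exp (((k:ℝ)^2-1)/4) * Real.exp ((k:ℝ)/2)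
      = Real.exp (((k:ℝ)+1)^2/4) / Real.exp 2⁻¹ := by
    rw [eq_div_iff hupos.ne', ← Real.exp_add, ← Real.exp_add]; congr 1; ring
  rw [mul_sub, h1, h2]
  set u := Real.exp 2⁻¹ with hudef
  set x := Real.exp (((k:ℝ)+1)^2/4) with hxdef
  set s := Real.sqrt π with hsdef
  field_simp

/- ### assembly -/

lemma muLog_ae_pos : ∀ᵐ r ∂muLog, 0 < r := by
  have h : ∀ᵐ r ∂((volume : Measure ℝ).restrict (Set.Ioi (0:ℝ))), 0 < r :=
    ae_restrict_mem measurableSet_Ioi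
  exact (withDensity_absolutelyContinuous _ _).ae_le h

lemma meas_pow (k : ℕ) (c : ℝ≥0∞) :
    Measurable fun r : ℝ => c * (ENNReal.ofReal r) ^ k :=
  (ENNReal.measurable_ofReal.pow_const k).const_mul c

lemma norm1_le {g : ℂ → ℂ} (hg : Differentiable ℂ g) :
    norm1 muLog g ≤ ∑' k, (‖tc g k‖₊ : ℝ≥0∞) * ∫⁻ r, (ENNReal.ofReal r) ^ k ∂muLog := by
  rw [norm1]
  calc ∫⁻ r, M1 g r ∂muLog
      ≤ ∫⁻ r, ∑' k, (‖tc g k‖₊ : ℝ≥0∞) * (ENNReal.ofReal r) ^ k ∂muLog := by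
        apply lintegral_mono_ae
        filter_upwards [muLog_ae_pos] with r hr
        exact M1_le hg hr.le
    _ = ∑' k, ∫⁻ r, (‖tc g k‖₊ : ℝ≥0∞) * (ENNReal.ofReal r) ^ k ∂muLog :=
        lintegral_tsum fun k => (meas_pow k _).aemeasurable
    _ = ∑' k, (‖tc g k‖₊ : ℝ≥0∞) * ∫⁻ r, (ENNReal.ofReal r) ^ k ∂muLog := by
        refine tsum_congr fun k => ?_
        rw [lintegral_const_mul _ (ENNReal.measurable_ofReal.pow_const k)]

lemma nu_le_norm1 {f : ℂ → ℂ} (hf : Differentiable ℂ f) :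
    ∑' k, (‖tc f k‖₊ : ℝ≥0∞) * ∫⁻ r in Ik k, (ENNReal.ofReal r) ^ k ∂muLog
      ≤ norm1 muLog f := by
  calc ∑' k, (‖tc f k‖₊ : ℝ≥0∞) * ∫⁻ r in Ik k, (ENNReal.ofReal r) ^ k ∂muLog
      = ∑' k, ∫⁻ r in Ik k, (‖tc f k‖₊ : ℝ≥0∞) * (ENNReal.ofReal r) ^ k ∂muLog := by
        refine tsum_congr fun k => ?_
        rw [lintegral_const_mul _ (ENNReal.measurable_ofReal.pow_const k)]
    _ ≤ ∑' k, ∫⁻ r in Ik k, M1 f r ∂muLog := by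
        refine ENNReal.tsum_le_tsum fun k => lintegral_mono_ae ?_
        filter_upwards [ae_restrict_mem (Ik_meas k)] with r hr
        exact coeff_le_M1 hf (Ik_subset k hr) k
    _ = ∫⁻ r in ⋃ k, Ik k, M1 f r ∂muLog := by
        rw [Measure.restrict_iUnion Ik_disjoint (fun k => Ik_meas k), lintegral_sum_measure]
    _ ≤ ∫⁻ r, M1 f r ∂muLog := lintegral_mono' Measure.restrict_le_self le_rfl

/-- Example 1.6: for `R = ∞` and `dμ(r) = exp(-(log r)²) dr`, the Bergman space `A¹_μ` of
entire functions is solid: it coincides with its solid hull. -/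
theorem stmt6 : Aone ⊤ muLog = SolidHull ⊤ muLog := by
  ext g
  constructor
  · intro hg
    exact ⟨hg.1, g, hg, fun k => le_rfl⟩
  · rintro ⟨hgdiff, f, ⟨hfdiff, hffin⟩, hcoef⟩
    refine ⟨hgdiff, ?_⟩
    have hgd : Differentiable ℂ g := by
      rw [← differentiableOn_univ, ← dom_top]; exact hgdiff
    have hfd : Differentiable ℂ f := by
      rw [← differentiableOn_univ, ← dom_top]; exact hfdiff
    have h1 := norm1_le hgd
    have h2 : ∑' k, (‖tc g k‖₊ : ℝ≥0∞) * ∫⁻ r, (ENNReal.ofReal r) ^ k ∂muLog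
        ≤ ∑' k, (‖tc f k‖₊ : ℝ≥0∞) * ∫⁻ r, (ENNReal.ofReal r) ^ k ∂muLog := by
      refine ENNReal.tsum_le_tsum fun k => mul_le_mul_left ?_ _
      exact_mod_cast (by exact_mod_cast hcoef k : ‖tc g k‖₊ ≤ ‖tc f k‖₊)
    have h3 : ∑' k, (‖tc f k‖₊ : ℝ≥0∞) * ∫⁻ r, (ENNReal.ofReal r) ^ k ∂muLog
        ≤ Ccst * ∑' k, (‖tc f k‖₊ : ℝ≥0∞) * ∫⁻ r in Ik k, (ENNReal.ofReal r) ^ k ∂muLog := by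
      rw [← ENNReal.tsum_mul_left]
      refine ENNReal.tsum_le_tsum fun k => ?_
      calc (‖tc f k‖₊ : ℝ≥0∞) * ∫⁻ r, (ENNReal.ofReal r) ^ k ∂muLog
          ≤ (‖tc f k‖₊ : ℝ≥0∞) * (Ccst * ∫⁻ r in Ik k, (ENNReal.ofReal r) ^ k ∂muLog) :=
            mul_le_mul_right (mom_le_nu k) _
        _ = Ccst * ((‖tc f k‖₊ : ℝ≥0∞) * ∫⁻ r in Ik k, (ENNReal.ofReal r) ^ k ∂muLog) := by
            rw [mul_left_comm]
    have h4 := nu_le_norm1 hfd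
    calc norm1 muLog g ≤ Ccst * norm1 muLog f :=
          h1.trans (h2.trans (h3.trans (mul_le_mul_right h4 Ccst)))
      _ < ⊤ := ENNReal.mul_lt_top (lt_of_le_of_ne le_top Ccst_ne_top) hffin


end
end

section
/- For every L∈ℕ there is a constant c=c(L)>0 such that for every m∈ℕ₀, every polynomial g(z)=Σ_{k=m+1}^{m+L} α_k z^k with at most L consecutive nonzero Taylor coefficients, and every r>0, one has M₁(g,r) ≤ Σ_{k=m+1}^{m+L} |α_k| r^k ≤ c·M₁(g,r); the constant c is independent of m and r. -/
open MeasureTheory Complex Real Set Filter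
open scoped ENNReal NNReal Topology

noncomputable section

lemma intA (n : ℤ) : ∫ φ in (0:ℝ)..(2*π), Complex.exp (n * φ * I) =
    if n = 0 then (2*π : ℂ) else 0 := by
  split_ifs with h
  · simp [h]
  · have hc : (n : ℂ) * I ≠ 0 := by simp [h, Complex.I_ne_zero]
    have H := integral_exp_mul_complex (a := 0) (b := 2*π) hc
    have h1 : ∀ φ : ℝ, (n:ℂ) * φ * I = (n:ℂ)*I * φ := by intro φ; ring
    simp_rw [h1]
    rw [H]
    have : Complex.exp ((n:ℂ)*I*(2*π)) = 1 := by
      rw [show ((n:ℂ)*I*(2*π)) = n * (2*π*I) by ring]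
      exact Complex.exp_int_mul_two_pi_mul_I n
    simp [this]

lemma coeff (S : Finset ℕ) (α : ℕ → ℂ) (r : ℝ) (k : ℕ) (hk : k ∈ S) :
    (2*π : ℂ) * (α k * (r:ℂ)^k) =
      ∫ φ in (0:ℝ)..(2*π),
        (∑ j ∈ S, α j * ((r:ℂ) * Complex.exp ((φ:ℂ)*I))^j) * Complex.exp (-(k:ℂ)*φ*I) := by
  have hpt : ∀ φ : ℝ,
      (∑ j ∈ S, α j * ((r:ℂ) * Complex.exp ((φ:ℂ)*I))^j) * Complex.exp (-(k:ℂ)*φ*I)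
      = ∑ j ∈ S, (α j * (r:ℂ)^j) * Complex.exp ((((j:ℤ)-(k:ℤ)):ℂ) * φ * I) := by
    intro φ
    rw [Finset.sum_mul]
    refine Finset.sum_congr rfl fun j _ => ?_
    have h2 : Complex.exp ((φ:ℂ)*I) ^ j * Complex.exp (-(k:ℂ)*φ*I)
        = Complex.exp ((((j:ℤ)-(k:ℤ)):ℂ) * φ * I) := by
      rw [← Complex.exp_nat_mul, ← Complex.exp_add]
      congr 1; push_cast; ring
    rw [mul_pow, mul_assoc, mul_assoc, h2, ← mul_assoc]
  simp_rw [hpt]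
  rw [intervalIntegral.integral_finset_sum]
  · have : ∀ j ∈ S, (∫ φ in (0:ℝ)..(2*π),
        (α j * (r:ℂ)^j) * Complex.exp ((((j:ℤ)-(k:ℤ)):ℂ) * φ * I))
        = (α j * (r:ℂ)^j) * (if ((j:ℤ)-(k:ℤ)) = 0 then (2*π:ℂ) else 0) := by
      intro j _
      rw [intervalIntegral.integral_const_mul]
      congr 1
      exact_mod_cast intA ((j:ℤ)-(k:ℤ))
    rw [Finset.sum_congr rfl this]
    rw [Finset.sum_eq_single k]
    · simp; ring
    · intro j hj hne
      have : ¬ ((j:ℤ)-(k:ℤ) = 0) := by omega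
      simp [this]
    · intro h; exact absurd hk h
  · intro j _
    apply Continuous.intervalIntegrable
    fun_prop

/-- For every `L` there is `c = c(L) > 0`, independent of `m` and `r`, such that for every
polynomial `g(z) = ∑_{k=m+1}^{m+L} α_k z^k` with at most `L` consecutive nonzero Taylor
coefficients and every `r > 0`:
`M₁(g,r) ≤ ∑_{k=m+1}^{m+L} |α_k| r^k ≤ c · M₁(g,r)`. -/
theorem stmt9 (L : ℕ) :
    ∃ c : ℝ, 0 < c ∧
      ∀ (m : ℕ) (α : ℕ → ℂ) (r : ℝ), 0 < r →
        M1 (fun z => ∑ k ∈ Finset.Icc (m + 1) (m + L), α k * z ^ k) r ≤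
            ENNReal.ofReal (∑ k ∈ Finset.Icc (m + 1) (m + L), ‖α k‖ * r ^ k) ∧
        ENNReal.ofReal (∑ k ∈ Finset.Icc (m + 1) (m + L), ‖α k‖ * r ^ k) ≤
          ENNReal.ofReal c *
            M1 (fun z => ∑ k ∈ Finset.Icc (m + 1) (m + L), α k * z ^ k) r := by
  refine ⟨L + 1, by positivity, fun m α r hr => ?_⟩
  set S := Finset.Icc (m + 1) (m + L) with hS
  set g : ℂ → ℂ := fun z => ∑ k ∈ S, α k * z ^ k with hg
  set F : ℝ → ℝ := fun φ => ‖g ((r:ℂ) * Complex.exp ((φ:ℂ)*I))‖ with hF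
  have hπ : (0:ℝ) < 2*π := by positivity
  have hFcont : Continuous F := by
    apply Continuous.norm
    apply Continuous.comp (by fun_prop : Continuous g)
    fun_prop
  have hFnn : ∀ φ, 0 ≤ F φ := fun φ => norm_nonneg _
  set C : ℝ := ∑ k ∈ S, ‖α k‖ * r ^ k with hC
  have hCnn : 0 ≤ C := Finset.sum_nonneg fun k _ => by positivity
  set I₀ : ℝ := ∫ φ in (0:ℝ)..(2*π), F φ with hI₀
  have hI₀nn : 0 ≤ I₀ :=
    intervalIntegral.integral_nonneg (le_of_lt hπ) (fun φ _ => hFnn φ)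
  -- M1 = ofReal I₀ / ofReal (2π)
  have hM1 : M1 g r = ENNReal.ofReal I₀ / ENNReal.ofReal (2*π) := by
    unfold M1
    congr 1
    rw [hI₀, intervalIntegral.integral_of_le (le_of_lt hπ)]
    rw [MeasureTheory.ofReal_integral_eq_lintegral_ofReal]
    · refine lintegral_congr fun φ => ?_
      exact (ofReal_norm (g ((r:ℂ) * Complex.exp ((φ:ℂ)*Complex.I)))).symm
    · exact (hFcont.integrableOn_Ioc)
    · exact Filter.Eventually.of_forall hFnn
  -- pointwise bound F ≤ C
  have hFle : ∀ φ : ℝ, F φ ≤ C := by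
    intro φ
    refine (norm_sum_le S (fun k => α k * ((r:ℂ) * Complex.exp ((φ:ℂ)*I)) ^ k)).trans ?_
    apply Finset.sum_le_sum
    intro k _
    rw [norm_mul, norm_pow, norm_mul]
    simp [Complex.norm_exp, abs_of_pos hr]
  -- I₀ ≤ C * 2π
  have hI₀le : I₀ ≤ C * (2*π) := by
    have h := intervalIntegral.integral_mono_on (f := F) (g := fun _ => C)
      (μ := volume) (le_of_lt hπ)
      (hFcont.intervalIntegrable _ _) intervalIntegrable_const
      (fun φ _ => hFle φ)
    simp only [intervalIntegral.integral_const, smul_eq_mul, sub_zero] at h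
    rw [hI₀]; linarith
  -- per-coefficient lower bound: ‖α k‖ * r^k * (2π) ≤ I₀
  have hcoef : ∀ k ∈ S, ‖α k‖ * r ^ k * (2*π) ≤ I₀ := by
    intro k hk
    have h1 := coeff S α r k hk
    have h2 : ‖(2*π : ℂ) * (α k * (r:ℂ)^k)‖ = 2*π * (‖α k‖ * r^k) := by
      simp [norm_mul, abs_of_pos hr, abs_of_pos pi_pos]
      try ring
    have h3 : ‖∫ φ in (0:ℝ)..(2*π),
        (∑ j ∈ S, α j * ((r:ℂ) * Complex.exp ((φ:ℂ)*I))^j) * Complex.exp (-(k:ℂ)*φ*I)‖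
        ≤ I₀ := by
      refine (intervalIntegral.norm_integral_le_integral_norm (le_of_lt hπ)).trans ?_
      apply le_of_eq
      rw [hI₀]
      apply intervalIntegral.integral_congr
      intro φ _
      simp only [hF, hg, norm_mul]
      have h4 : ‖Complex.exp (-(k:ℂ)*φ*I)‖ = 1 := by
        simp [Complex.norm_exp]
      rw [h4, mul_one]
    calc ‖α k‖ * r ^ k * (2*π) = ‖(2*π : ℂ) * (α k * (r:ℂ)^k)‖ := by rw [h2]; ring
    _ ≤ I₀ := h1 ▸ h3
  constructor
  · rw [hM1]
    apply ENNReal.div_le_of_le_mul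
    rw [← ENNReal.ofReal_mul hCnn]
    exact ENNReal.ofReal_le_ofReal hI₀le
  · rw [hM1]
    have hCle : C ≤ (L:ℝ) * (I₀ / (2*π)) := by
      have : C ≤ ∑ k ∈ S, I₀ / (2*π) := by
        apply Finset.sum_le_sum
        intro k hk
        rw [le_div_iff₀ hπ]
        exact hcoef k hk
      rwa [Finset.sum_const, hS, Nat.card_Icc, nsmul_eq_mul,
        show m + L + 1 - (m+1) = L by omega] at this
    calc ENNReal.ofReal C ≤ ENNReal.ofReal ((L:ℝ) * (I₀ / (2*π))) :=
          ENNReal.ofReal_le_ofReal hCle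
    _ = ENNReal.ofReal (L:ℝ) * ENNReal.ofReal (I₀ / (2*π)) := by
          rw [ENNReal.ofReal_mul (by positivity)]
    _ ≤ ENNReal.ofReal ((L:ℝ)+1) * ENNReal.ofReal (I₀ / (2*π)) := by
          gcongr; linarith
    _ = ENNReal.ofReal ((L:ℝ)+1) * (ENNReal.ofReal I₀ / ENNReal.ofReal (2*π)) := by
          rw [ENNReal.ofReal_div_of_pos hπ]
    _ = ENNReal.ofReal ((L:ℕ)+1:ℝ) * (ENNReal.ofReal I₀ / ENNReal.ofReal (2*π)) := by
          norm_cast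

end
end

section
/- Let X be a Banach space of analytic functions on the unit disc 𝔻 in which the polynomials are dense, let γ_k>0 (k≥0), and define the pairing ⟨f,g⟩=Σ_{k≥0} f̂(k)·conj(ĝ(k))·γ_k whenever the series converges absolutely (for a radial weight w this coincides with ∫_𝔻 f·conj(g)·w dA with γ_k=∫₀¹ r^{2k+1}w(r)dr, up to a fixed constant). Let Y be the space of analytic functions g on 𝔻 such that the series defining ⟨f,g⟩ converges absolutely for every f∈X and sup_{f∈B_X}|⟨f,g⟩|<∞, where B_X is the unit ball of X. If X is solid and there is C>0 such that ‖M_θ f‖_X ≤ C‖f‖_X for all f∈X and all sequences θ=(θ_k) with |θ_k|≤1, then Y is solid. -/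
open MeasureTheory Complex Real Set Filter
open scoped ENNReal NNReal Topology

noncomputable section

/-- The space `Y` of analytic functions `g` on `𝔻` such that the pairing
`⟨f,g⟩ = ∑_k f̂(k) conj(ĝ(k)) γ_k` converges absolutely for every `f ∈ X` and is uniformly
bounded on the unit ball `B_X = {f ∈ X : N f ≤ 1}`. -/
def Ydual (X : Set (ℂ → ℂ)) (N : (ℂ → ℂ) → ℝ) (γ : ℕ → ℝ) : Set (ℂ → ℂ) :=
  {g | DifferentiableOn ℂ g (Metric.ball (0 : ℂ) 1) ∧
    (∀ f ∈ X, Summable fun k => ‖tc f k‖ * ‖tc g k‖ * γ k) ∧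
    ∃ C : ℝ, ∀ f ∈ X, N f ≤ 1 →
      ‖∑' k, tc f k * (starRingEnd ℂ) (tc g k) * (γ k : ℂ)‖ ≤ C}

/-- If `f` has a power series `p` at `0`, then `tc f k` is the `k`-th coefficient of `p`. -/
lemma tc_eq_coeff {f : ℂ → ℂ} {p : FormalMultilinearSeries ℂ ℂ ℂ} {r : ℝ≥0∞}
    (h : HasFPowerSeriesOnBall f p 0 r) (k : ℕ) : tc f k = p.coeff k := by
  have h1 : (k.factorial) • p k (fun _ ↦ (1 : ℂ)) = iteratedFDeriv ℂ k f 0 (fun _ ↦ 1) :=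
    h.factorial_smul (1 : ℂ) k
  have h2 : p k (fun _ ↦ (1 : ℂ)) = p.coeff k := rfl
  unfold tc
  rw [iteratedDeriv_eq_iteratedFDeriv, ← h1, h2, nsmul_eq_mul]
  have h3 : (k.factorial : ℂ) ≠ 0 := by exact_mod_cast Nat.factorial_ne_zero k
  field_simp

/-- Given `f` analytic on the unit disc and coefficients `a` dominated by those of `f`,
there exists an analytic function on the disc with Taylor coefficients `a`. -/
lemma exists_solid_fn {f : ℂ → ℂ} (hf : DifferentiableOn ℂ f (Metric.ball (0 : ℂ) 1))
    (a : ℕ → ℂ) (ha : ∀ k, ‖a k‖ ≤ ‖tc f k‖) :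
    ∃ F : ℂ → ℂ, DifferentiableOn ℂ F (Metric.ball (0 : ℂ) 1) ∧ (∀ k, tc F k = a k) ∧
      ∀ z, F z = ∑' n, a n * z ^ n := by
  set q : FormalMultilinearSeries ℂ ℂ ℂ := FormalMultilinearSeries.ofScalars ℂ a with hq
  have hrad : (1 : ℝ≥0∞) ≤ q.radius := by
    refine ENNReal.le_of_forall_nnreal_lt (fun r hr => ?_)
    have hr1 : (r : ℝ) < 1 := by exact_mod_cast hr
    set s : ℝ≥0 := (r + 1) / 2 with hs
    have hrs : (r : ℝ) < (s : ℝ) := by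
      push_cast [hs]; linarith
    have hs1 : (s : ℝ) < 1 := by
      push_cast [hs]; linarith
    have hspos : 0 < s := by
      have : (0 : ℝ) < (s : ℝ) := by push_cast [hs]; linarith [r.coe_nonneg]
      exact_mod_cast this
    have hball : DifferentiableOn ℂ f (Metric.closedBall (0 : ℂ) s) :=
      hf.mono (Metric.closedBall_subset_ball (by simpa using hs1))
    have hp := hball.hasFPowerSeriesOnBall hspos
    have hple : (s : ℝ≥0∞) ≤ (cauchyPowerSeries f 0 s).radius := hp.r_le
    have hrlt : (r : ℝ≥0∞) < (cauchyPowerSeries f 0 s).radius :=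
      lt_of_lt_of_le (by exact_mod_cast hrs) hple
    obtain ⟨B, _hB, hbound⟩ := (cauchyPowerSeries f 0 s).norm_mul_pow_le_of_lt_radius hrlt
    refine q.le_radius_of_bound B (r := r) (fun n => ?_)
    · have h1 : ‖q n‖ = ‖a n‖ := FormalMultilinearSeries.ofScalars_norm ℂ a n
      have h2 : ‖tc f n‖ = ‖(cauchyPowerSeries f 0 s) n‖ := by
        rw [tc_eq_coeff hp n, FormalMultilinearSeries.norm_apply_eq_norm_coef]
      calc ‖q n‖ * (r : ℝ) ^ n = ‖a n‖ * (r : ℝ) ^ n := by rw [h1]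
        _ ≤ ‖tc f n‖ * (r : ℝ) ^ n := by
            exact mul_le_mul_of_nonneg_right (ha n) (by positivity)
        _ = ‖(cauchyPowerSeries f 0 s) n‖ * (r : ℝ) ^ n := by rw [h2]
        _ ≤ B := hbound n
  have hqpos : 0 < q.radius := lt_of_lt_of_le one_pos hrad
  have hsum : HasFPowerSeriesOnBall q.sum q 0 1 :=
    (q.hasFPowerSeriesOnBall hqpos).mono one_pos hrad
  refine ⟨q.sum, ?_, ?_, ?_⟩
  · have := hsum.differentiableOn
    have hb : Metric.eball (0 : ℂ) 1 = Metric.ball (0 : ℂ) 1 := by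
      rw [show (1 : ℝ≥0∞) = ((1 : ℝ≥0) : ℝ≥0∞) by norm_num, Metric.emetric_ball_nnreal]
      norm_num
    rwa [hb] at this
  · intro k
    rw [tc_eq_coeff hsum k]
    have : q.coeff k = q k (fun _ ↦ (1 : ℂ)) := rfl
    rw [this, hq, FormalMultilinearSeries.ofScalars_apply_eq]
    simp
  · intro z
    unfold FormalMultilinearSeries.sum
    refine tsum_congr (fun n => ?_)
    rw [hq, FormalMultilinearSeries.ofScalars_apply_eq]
    simp [mul_comm]

/-- Lemma 2.10: let `X` be a Banach space (with norm `N`) of analytic functions on `𝔻` in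
which the polynomials are dense, and let `γ_k > 0` define the pairing
`⟨f,g⟩ = ∑_k f̂(k) conj(ĝ(k)) γ_k`. If `X` is solid and `‖M_θ f‖_X ≤ C ‖f‖_X` for all
sequences `θ` with `|θ_k| ≤ 1`, then the space `Y` of analytic functions defining bounded
functionals on `B_X` via the pairing is solid, too. -/
theorem stmt13 (X : Set (ℂ → ℂ)) (N : (ℂ → ℂ) → ℝ) (γ : ℕ → ℝ)
    (hγ : ∀ k, 0 < γ k)
    -- X consists of analytic functions on 𝔻
    (hanal : ∀ f ∈ X, DifferentiableOn ℂ f (Metric.ball (0 : ℂ) 1))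
    -- X is a vector space
    (hzero : (0 : ℂ → ℂ) ∈ X)
    (hadd : ∀ f ∈ X, ∀ g ∈ X, f + g ∈ X)
    (hsmul : ∀ c : ℂ, ∀ f ∈ X, c • f ∈ X)
    -- N is a norm on X
    (hN0 : ∀ f ∈ X, 0 ≤ N f)
    (hNdef : ∀ f ∈ X, N f = 0 → f = 0)
    (hNadd : ∀ f ∈ X, ∀ g ∈ X, N (f + g) ≤ N f + N g)
    (hNsmul : ∀ c : ℂ, ∀ f ∈ X, N (c • f) = ‖c‖ * N f)
    -- X is complete
    (hcomplete : ∀ u : ℕ → ℂ → ℂ, (∀ n, u n ∈ X) →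
      (∀ ε : ℝ, 0 < ε → ∃ M, ∀ p ≥ M, ∀ q ≥ M, N (u p - u q) < ε) →
      ∃ f ∈ X, ∀ ε : ℝ, 0 < ε → ∃ M, ∀ p ≥ M, N (u p - f) < ε)
    -- the polynomials are dense in X
    (hdense : ∀ f ∈ X, ∀ ε : ℝ, 0 < ε → ∃ p : Polynomial ℂ,
      (fun z => Polynomial.eval z p) ∈ X ∧ N (f - fun z => Polynomial.eval z p) < ε)
    -- X is solid
    (hsolid : ∀ f ∈ X, ∀ g : ℂ → ℂ, DifferentiableOn ℂ g (Metric.ball (0 : ℂ) 1) →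
      (∀ k, ‖tc g k‖ ≤ ‖tc f k‖) → g ∈ X)
    -- the multipliers M_θ are uniformly bounded on X
    (C : ℝ) (hC : 0 < C)
    (hMθ : ∀ f ∈ X, ∀ θ : ℕ → ℂ, (∀ k, ‖θ k‖ ≤ 1) →
      ∀ g ∈ X, (∀ k, tc g k = θ k * tc f k) → N g ≤ C * N f) :
    -- conclusion: Y is solid
    ∀ g ∈ Ydual X N γ, ∀ h : ℂ → ℂ, DifferentiableOn ℂ h (Metric.ball (0 : ℂ) 1) →
      (∀ k, ‖tc h k‖ ≤ ‖tc g k‖) → h ∈ Ydual X N γ := by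
  intro g hg h hdiffh hcoeff
  obtain ⟨hgd, hgsum, Cg, hCg⟩ := hg
  refine ⟨hdiffh, ?_, ?_⟩
  · intro f hf
    refine Summable.of_nonneg_of_le
      (fun k => mul_nonneg (mul_nonneg (norm_nonneg _) (norm_nonneg _)) (hγ k).le)
      (fun k => ?_) (hgsum f hf)
    exact mul_le_mul_of_nonneg_right
      (mul_le_mul_of_nonneg_left (hcoeff k) (norm_nonneg _)) (hγ k).le
  · set C' : ℝ := max C 1 with hC'
    have hC'1 : (1 : ℝ) ≤ C' := le_max_right _ _
    have hC'pos : (0 : ℝ) < C' := lt_of_lt_of_le one_pos hC'1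
    have habs : ‖((C'⁻¹ : ℝ) : ℂ)‖ = C'⁻¹ := by
      rw [Complex.norm_real, Real.norm_eq_abs, _root_.abs_of_nonneg (inv_nonneg.mpr hC'pos.le)]
    have hinvle : C'⁻¹ ≤ 1 := by
      have h1 := inv_mul_cancel₀ hC'pos.ne'
      nlinarith [inv_nonneg.mpr hC'pos.le]
    refine ⟨C' * Cg, fun f hf hNf => ?_⟩
    -- the multiplier sequence
    set w : ℕ → ℂ := fun k => tc f k * (starRingEnd ℂ) (tc g k) with hw
    set θ : ℕ → ℂ := fun k => if w k = 0 then 1 else (‖w k‖ : ℂ) / w k with hθ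
    have hθ1 : ∀ k, ‖θ k‖ ≤ 1 := by
      intro k
      simp only [hθ]
      split
      · simp
      · rename_i hk
        exact le_of_eq (by
          rw [norm_div, Complex.norm_real, norm_norm, div_self (norm_ne_zero_iff.mpr hk)])
    have hθw : ∀ k, θ k * w k = ((‖tc f k‖ * ‖tc g k‖ : ℝ) : ℂ) := by
      intro k
      have hnw : ‖w k‖ = ‖tc f k‖ * ‖tc g k‖ := by
        rw [hw]; simp [norm_mul]
      simp only [hθ]
      split
      · rename_i hk
        rw [hk, mul_zero, ← hnw, hk, norm_zero]
        simp
      · rename_i hk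
        rw [div_mul_cancel₀ _ hk, hnw]
    -- f1 : the function with coefficients θ k * tc f k
    obtain ⟨f1, hf1d, hf1c, hf1s⟩ := exists_solid_fn (hanal f hf) (fun k => θ k * tc f k)
      (fun k => by
        rw [norm_mul]
        exact mul_le_of_le_one_left (norm_nonneg _) (hθ1 k))
    have hf1X : f1 ∈ X := hsolid f hf f1 hf1d (fun k => by
      rw [hf1c, norm_mul]
      exact mul_le_of_le_one_left (norm_nonneg _) (hθ1 k))
    have hNf1 : N f1 ≤ C * N f := hMθ f hf θ hθ1 f1 hf1X hf1c
    -- f2 : rescaled by C'⁻¹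
    obtain ⟨f2, hf2d, hf2c, hf2s⟩ := exists_solid_fn (hanal f hf)
      (fun k => ((C'⁻¹ : ℝ) : ℂ) * (θ k * tc f k))
      (fun k => by
        rw [norm_mul, norm_mul]
        calc ‖((C'⁻¹ : ℝ) : ℂ)‖ * (‖θ k‖ * ‖tc f k‖)
            ≤ 1 * (1 * ‖tc f k‖) := by
              gcongr
              · rw [habs]; exact hinvle
              · exact hθ1 k
          _ = ‖tc f k‖ := by ring)
    have hf2X : f2 ∈ X := hsolid f hf f2 hf2d (fun k => by
      rw [hf2c, norm_mul, norm_mul]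
      calc ‖((C'⁻¹ : ℝ) : ℂ)‖ * (‖θ k‖ * ‖tc f k‖)
          ≤ 1 * (1 * ‖tc f k‖) := by
            gcongr
            · rw [habs]; exact hinvle
            · exact hθ1 k
        _ = ‖tc f k‖ := by ring)
    have hf2eq : f2 = ((C'⁻¹ : ℝ) : ℂ) • f1 := by
      funext z
      rw [Pi.smul_apply, smul_eq_mul, hf2s, hf1s, ← tsum_mul_left]
      exact tsum_congr (fun n => by ring)
    have hNf2 : N f2 ≤ 1 := by
      rw [hf2eq, hNsmul _ f1 hf1X, habs]
      have h2 : N f1 ≤ C' := le_trans hNf1 (by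
        calc C * N f ≤ C' * 1 := by
              apply mul_le_mul (le_max_left _ _) hNf (hN0 f hf) hC'pos.le
          _ = C' := mul_one _)
      calc C'⁻¹ * N f1 ≤ C'⁻¹ * C' := by gcongr
        _ = 1 := inv_mul_cancel₀ hC'pos.ne'
    -- the absolute sum
    have hSg : Summable (fun k => ‖tc f k‖ * ‖tc g k‖ * γ k) := hgsum f hf
    set S : ℝ := ∑' k, ‖tc f k‖ * ‖tc g k‖ * γ k with hS
    have hS0 : 0 ≤ S := tsum_nonneg (fun k => mul_nonneg (mul_nonneg (norm_nonneg _) (norm_nonneg _)) (hγ k).le)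
    -- pairing of f2 with g
    have key : (∑' k, tc f2 k * (starRingEnd ℂ) (tc g k) * (γ k : ℂ))
        = ((C'⁻¹ : ℝ) : ℂ) * (S : ℂ) := by
      have hterm : ∀ k, tc f2 k * (starRingEnd ℂ) (tc g k) * (γ k : ℂ)
          = ((C'⁻¹ : ℝ) : ℂ) * ((‖tc f k‖ * ‖tc g k‖ * γ k : ℝ) : ℂ) := by
        intro k
        rw [hf2c]
        have : ((C'⁻¹ : ℝ) : ℂ) * (θ k * tc f k) * (starRingEnd ℂ) (tc g k) * (γ k : ℂ)
            = ((C'⁻¹ : ℝ) : ℂ) * (θ k * w k) * (γ k : ℂ) := by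
          rw [hw]; ring
        rw [this, hθw k]
        push_cast
        ring
      rw [tsum_congr hterm, tsum_mul_left]
      congr 1
      rw [hS]
      exact (Complex.ofRealCLM.map_tsum hSg).symm
    have h2 := hCg f2 hf2X hNf2
    rw [key] at h2
    have hnorm : ‖((C'⁻¹ : ℝ) : ℂ) * (S : ℂ)‖ = C'⁻¹ * S := by
      rw [norm_mul, habs, Complex.norm_real, Real.norm_eq_abs, _root_.abs_of_nonneg hS0]
    rw [hnorm] at h2
    have hSle : S ≤ C' * Cg := by
      have := mul_le_mul_of_nonneg_left h2 hC'pos.le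
      rwa [← mul_assoc, mul_inv_cancel₀ hC'pos.ne', one_mul] at this
    -- final estimate
    have hsum_h : Summable (fun k => ‖tc f k‖ * ‖tc h k‖ * γ k) := by
      refine Summable.of_nonneg_of_le
        (fun k => mul_nonneg (mul_nonneg (norm_nonneg _) (norm_nonneg _)) (hγ k).le)
        (fun k => ?_) hSg
      exact mul_le_mul_of_nonneg_right
        (mul_le_mul_of_nonneg_left (hcoeff k) (norm_nonneg _)) (hγ k).le
    have hnorm_term : ∀ k, ‖tc f k * (starRingEnd ℂ) (tc h k) * (γ k : ℂ)‖
        = ‖tc f k‖ * ‖tc h k‖ * γ k := by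
      intro k
      rw [norm_mul, norm_mul, RCLike.norm_conj, Complex.norm_real, Real.norm_eq_abs,
        _root_.abs_of_nonneg (hγ k).le]
    have hsum_norm : Summable (fun k => ‖tc f k * (starRingEnd ℂ) (tc h k) * (γ k : ℂ)‖) := by
      simpa only [hnorm_term] using hsum_h
    calc ‖∑' k, tc f k * (starRingEnd ℂ) (tc h k) * (γ k : ℂ)‖
        ≤ ∑' k, ‖tc f k * (starRingEnd ℂ) (tc h k) * (γ k : ℂ)‖ :=
          norm_tsum_le_tsum_norm hsum_norm
      _ = ∑' k, ‖tc f k‖ * ‖tc h k‖ * γ k := tsum_congr hnorm_term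
      _ ≤ S := by
          refine Summable.tsum_le_tsum (fun k => ?_) hsum_h hSg
          exact mul_le_mul_of_nonneg_right
            (mul_le_mul_of_nonneg_left (hcoeff k) (norm_nonneg _)) (hγ k).le
      _ ≤ C' * Cg := hSle

end
end
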